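/- Let f ∈ W̃_s(A,c_*) with s ≥ 2, let k₀ ≥ 1 and θ₁*,…,θ_J* ∈ ℝ. Then for every θ ∈ ℝ^J with Σ_{j=1}^J θ_j = 0, ‖∇²M(θ) − ∇²M(θ⁰)‖_op ≤ (64π⁴A²/J) ‖θ − θ⁰‖². -/

import Mathlib

open MeasureTheory ProbabilityTheory Real Finset
open scoped ENNReal NNReal

noncomputable section

/-- `2πi` as a complex number. -/
def twoPiI : ℂ := 2 * Real.pi * Complex.I

/-- The complex exponential `e^{2πikx}`. -/
def eK (k : ℤ) (x : ℝ) : ℂ := Complex.exp (twoPiI * k * x)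

/-- The `k`-th Fourier coefficient `c_k = ∫₀¹ f(t) e^{-2πikt} dt` of `f : ℝ → ℝ`. -/
def fc (f : ℝ → ℝ) (k : ℤ) : ℂ :=
  ∫ t in (0:ℝ)..1, (f t : ℂ) * Complex.exp (-(twoPiI) * k * t)

/-- The Sobolev-type ball `W̃_s(A, c_*)` of 1-periodic functions in `L²([0,1])` with
`∑ (1+|k|^{2s}) |c_k|² ≤ A²` and `|c₁| ≥ c_*`. -/
def sobolevBall (s A cstar : ℝ) : Set (ℝ → ℝ) :=
  { f | Function.Periodic f 1 ∧ Measurable f ∧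
        MemLp f 2 (volume.restrict (Set.Ioc (0:ℝ) 1)) ∧
        Summable (fun k : ℤ => (1 + |(k:ℝ)| ^ (2*s)) * ‖fc f k‖ ^ 2) ∧
        (∑' k : ℤ, (1 + |(k:ℝ)| ^ (2*s)) * ‖fc f k‖ ^ 2) ≤ A ^ 2 ∧
        cstar ≤ ‖fc f 1‖ }

/-- The constraint set `Θ_κ = { θ ∈ [-κ/2, κ/2]^J : ∑_j θ_j = 0 }`. -/
def ThetaK (κ : ℝ) (J : ℕ) : Set (Fin J → ℝ) :=
  { θ | (∀ j, θ j ∈ Set.Icc (-(κ/2)) (κ/2)) ∧ ∑ j, θ j = 0 }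

/-- The centered shifts `θ_j⁰ = θ_j* - (1/J) ∑_{j'} θ_{j'}*`. -/
def theta0 (J : ℕ) (θstar : Fin J → ℝ) : Fin J → ℝ :=
  fun j => θstar j - (J:ℝ)⁻¹ * ∑ j', θstar j'

/-- The population criterion
`M(θ) = (1/J) ∑_j ∑_{|k|≤k₀} | c_k e^{2πik(θ_j-θ_j*)} - (1/J) ∑_{j'} c_k e^{2πik(θ_{j'}-θ_{j'}*)} |²`. -/
def Mpop (f : ℝ → ℝ) (k0 J : ℕ) (θstar : Fin J → ℝ) (θ : Fin J → ℝ) : ℝ :=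
  (J:ℝ)⁻¹ * ∑ j : Fin J, ∑ k ∈ Finset.Icc (-(k0:ℤ)) (k0:ℤ),
    ‖fc f k * eK k (θ j - θstar j)
      - (J:ℂ)⁻¹ * ∑ j' : Fin J, fc f k * eK k (θ j' - θstar j')‖ ^ 2

/-- The Hessian matrix of a function `F : ℝ^J → ℝ`, with entries
`(∇²F(θ))_{i,j} = ∂²F/∂θ_i∂θ_j (θ)`. -/
def hess {J : ℕ} (F : (Fin J → ℝ) → ℝ) (θ : Fin J → ℝ) : Fin J → Fin J → ℝ :=
  fun i j => fderiv ℝ (fun x => fderiv ℝ F x (Pi.single j 1)) θ (Pi.single i 1)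

/-- The operator norm of a `J × J` real matrix w.r.t. the Euclidean norm:
`‖B‖_op = sup_{‖v‖ ≤ 1} ‖Bv‖`. -/
def opNorm {J : ℕ} (B : Fin J → Fin J → ℝ) : ℝ :=
  sSup ((fun v : Fin J → ℝ => Real.sqrt (∑ i, (∑ j, B i j * v j) ^ 2))
        '' {v : Fin J → ℝ | ∑ j, v j ^ 2 ≤ 1})

/-!
With `u = θ - θ*`, the variance identity `∑_j |z_j - z̄|² = ∑_j |z_j|² - J⁻¹ |∑_j z_j|²` turns the
criterion into `M(θ) = ∑_k |c_k|² - ∑_{a,b} g(u_a - u_b)` with `g(t) = J⁻² ∑_{|k|≤k₀} |c_k|² cos(2πkt)`,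
so `∇²M(θ) = -∑_{a,b} g''(u_a - u_b) (e_a - e_b)(e_a - e_b)ᵀ`. At `θ⁰` all differences `u_a - u_b`
vanish, and `|g''(0) - g''(t)| ≤ (t²/2) J⁻² ∑_k |c_k|² (2πk)⁴ ≤ 8π⁴A²t²/J²` since `k⁴ ≤ 1 + |k|^{2s}`
for `s ≥ 2`. Hence `∇²M(θ) - ∇²M(θ⁰)` is a weighted Laplacian whose weights are bounded by
`C (d_a - d_b)²`, where `d = θ - θ⁰` and `C = 8π⁴A²/J²`; as `∑_j d_j = 0`, every row sum of its
absolute values is at most `4C ∑_b (d_a - d_b)² ≤ 8CJ ‖d‖²`, and Schur's test concludes.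
-/

lemma sq_sum_mul_le_sum_abs_mul_sum_abs_mul_sq {ι : Type*} (s : Finset ι) (b v : ι → ℝ) :
    (∑ j ∈ s, b j * v j) ^ 2 ≤ (∑ j ∈ s, |b j|) * ∑ j ∈ s, |b j| * v j ^ 2 :=
  sum_sq_le_sum_mul_sum_of_sq_le_mul s (fun _ _ => abs_nonneg _) (fun _ _ => by positivity)
    (fun _ _ => by rw [mul_pow, ← mul_assoc, ← sq, sq_abs])

/-- Schur's test. -/
lemma opNorm_le_of_sum_abs_le {J : ℕ} {B : Fin J → Fin J → ℝ} {R : ℝ} (hR : 0 ≤ R)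
    (hrow : ∀ i, ∑ j, |B i j| ≤ R) (hcol : ∀ j, ∑ i, |B i j| ≤ R) : opNorm B ≤ R := by
  refine Real.sSup_le ?_ hR
  rintro _ ⟨v, hv : ∑ j, v j ^ 2 ≤ 1, rfl⟩
  have hBv : ∑ i, (∑ j, B i j * v j) ^ 2 ≤ R ^ 2 := calc
    ∑ i, (∑ j, B i j * v j) ^ 2 ≤ ∑ i, R * ∑ j, |B i j| * v j ^ 2 := by
        gcongr with i
        exact (sq_sum_mul_le_sum_abs_mul_sum_abs_mul_sq _ _ _).trans (by gcongr; exact hrow i)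
    _ = R * ∑ j, (∑ i, |B i j|) * v j ^ 2 := by
        rw [← mul_sum, sum_comm]; simp only [sum_mul]
    _ ≤ R * ∑ j, R * v j ^ 2 := by gcongr with j; exact hcol j
    _ = R ^ 2 * ∑ j, v j ^ 2 := by rw [← mul_sum]; ring
    _ ≤ R ^ 2 := mul_le_of_le_one_right (sq_nonneg R) hv
  calc √(∑ i, (∑ j, B i j * v j) ^ 2) ≤ √(R ^ 2) := Real.sqrt_le_sqrt hBv
    _ = R := Real.sqrt_sq hR

section WeightedLaplacian

variable {ι : Type*} [DecidableEq ι]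

lemma abs_single_sub_single_apply_le (a b i : ι) :
    |(Pi.single a 1 - Pi.single b 1 : ι → ℝ) i|
      ≤ (Pi.single a 1 : ι → ℝ) i + (Pi.single b 1 : ι → ℝ) i := by
  simp only [Pi.sub_apply, Pi.single_apply]; split_ifs <;> norm_num

variable [Fintype ι]

/-- The matrix `∑_{a,b} c a b • (e_a - e_b)(e_a - e_b)ᵀ`. -/
def weightedLaplacian (c : ι → ι → ℝ) (i j : ι) : ℝ :=
  ∑ a, ∑ b, c a b *
    ((Pi.single a 1 - Pi.single b 1 : ι → ℝ) i * (Pi.single a 1 - Pi.single b 1 : ι → ℝ) j)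

lemma weightedLaplacian_comm (c : ι → ι → ℝ) (i j : ι) :
    weightedLaplacian c i j = weightedLaplacian c j i := by
  simp only [weightedLaplacian, mul_comm ((Pi.single _ 1 - Pi.single _ 1 : ι → ℝ) i)]

lemma weightedLaplacian_sub (c c' : ι → ι → ℝ) (i j : ι) :
    weightedLaplacian c i j - weightedLaplacian c' i j
      = weightedLaplacian (fun a b => c a b - c' a b) i j := by
  simp only [weightedLaplacian, ← sum_sub_distrib, sub_mul]

lemma sum_abs_weightedLaplacian_le (c : ι → ι → ℝ) (i : ι) :
    ∑ j, |weightedLaplacian c i j| ≤ 2 * (∑ b, |c i b| + ∑ a, |c a i|) := by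
  have hedge : ∀ a b : ι, ∑ j, |(Pi.single a 1 - Pi.single b 1 : ι → ℝ) j| ≤ 2 := fun a b => calc
    _ ≤ ∑ j, ((Pi.single a 1 : ι → ℝ) j + (Pi.single b 1 : ι → ℝ) j) :=
        sum_le_sum fun j _ => abs_single_sub_single_apply_le a b j
    _ = 2 := by rw [sum_add_distrib, Fintype.sum_pi_single', Fintype.sum_pi_single']; norm_num
  calc ∑ j, |weightedLaplacian c i j|
      ≤ ∑ j, ∑ a, ∑ b, |c a b| * (|(Pi.single a 1 - Pi.single b 1 : ι → ℝ) i|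
          * |(Pi.single a 1 - Pi.single b 1 : ι → ℝ) j|) := by
        gcongr with j
        refine (abs_sum_le_sum_abs _ _).trans (sum_le_sum fun a _ => ?_)
        refine (abs_sum_le_sum_abs _ _).trans (sum_le_sum fun b _ => ?_)
        rw [abs_mul, abs_mul]
    _ = ∑ a, ∑ b, |c a b| * |(Pi.single a 1 - Pi.single b 1 : ι → ℝ) i|
          * ∑ j, |(Pi.single a 1 - Pi.single b 1 : ι → ℝ) j| := by
        rw [sum_comm]
        refine sum_congr rfl fun a _ => ?_
        rw [sum_comm]
        simp only [mul_sum, mul_assoc]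
    _ ≤ ∑ a, ∑ b, |c a b| * ((Pi.single a 1 : ι → ℝ) i + (Pi.single b 1 : ι → ℝ) i) * 2 := by
        gcongr with a _ b
        · exact mul_nonneg (abs_nonneg _)
            ((abs_nonneg _).trans (abs_single_sub_single_apply_le a b i))
        · exact abs_single_sub_single_apply_le a b i
        · exact hedge a b
    _ = 2 * (∑ b, |c i b| + ∑ a, |c a i|) := by
        simp only [mul_add, add_mul, sum_add_distrib, Pi.single_apply, mul_ite, ite_mul, mul_one,
          mul_zero, zero_mul, sum_ite_eq, sum_ite_irrel, sum_const_zero, mem_univ, if_true,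
          ← sum_mul]
        ring

end WeightedLaplacian

lemma sum_sq_sub_le_of_sum_eq_zero {ι : Type*} [Fintype ι] {d : ι → ℝ} (hd : ∑ b, d b = 0)
    (i : ι) : ∑ b, (d i - d b) ^ 2 ≤ 2 * Fintype.card ι * ∑ b, d b ^ 2 := by
  have hexpand : ∑ b, (d i - d b) ^ 2 = Fintype.card ι * d i ^ 2 + ∑ b, d b ^ 2 := by
    simp only [sub_sq, sum_add_distrib, sum_sub_distrib, sum_const, card_univ, nsmul_eq_mul,
      ← mul_sum, hd]
    ring
  have hdi : d i ^ 2 ≤ ∑ b, d b ^ 2 := single_le_sum (fun b _ => sq_nonneg (d b)) (mem_univ i)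
  have hcard : (1 : ℝ) ≤ Fintype.card ι := by exact_mod_cast Fintype.card_pos_iff.2 ⟨i⟩
  rw [hexpand]
  nlinarith

lemma opNorm_weightedLaplacian_le {J : ℕ} {c : Fin J → Fin J → ℝ} {d : Fin J → ℝ} {C : ℝ}
    (hC : 0 ≤ C) (hc : ∀ a b, |c a b| ≤ C * (d a - d b) ^ 2) (hd : ∑ j, d j = 0) :
    opNorm (weightedLaplacian c) ≤ 8 * C * J * ∑ j, d j ^ 2 := by
  have hrow : ∀ i, ∑ j, |weightedLaplacian c i j| ≤ 8 * C * J * ∑ j, d j ^ 2 := fun i => calc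
    _ ≤ 2 * (∑ b, |c i b| + ∑ a, |c a i|) := sum_abs_weightedLaplacian_le c i
    _ ≤ 2 * (∑ b, C * (d i - d b) ^ 2 + ∑ a, C * (d a - d i) ^ 2) := by
        gcongr with b _ a <;> apply hc
    _ = 4 * C * ∑ b, (d i - d b) ^ 2 := by
        simp only [← mul_sum, sub_sq_comm (d _) (d i)]; ring
    _ ≤ 4 * C * (2 * J * ∑ j, d j ^ 2) := by
        gcongr; simpa using sum_sq_sub_le_of_sum_eq_zero hd i
    _ = 8 * C * J * ∑ j, d j ^ 2 := by ring
  refine opNorm_le_of_sum_abs_le (by positivity) hrow fun j => ?_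
  simpa only [weightedLaplacian_comm c _ j] using hrow j

section Hessian

variable {J : ℕ}

lemma hess_const_sub (C : ℝ) (F : (Fin J → ℝ) → ℝ) (θ : Fin J → ℝ) (i j : Fin J) :
    hess (fun x => C - F x) θ i j = -hess F θ i j := by
  simp only [hess, fderiv_const_sub, neg_apply, fderiv_fun_neg]

lemma hess_comp_sub (F : (Fin J → ℝ) → ℝ) (φ θ : Fin J → ℝ) (i j : Fin J) :
    hess (fun x => F (x - φ)) θ i j = hess F (θ - φ) i j := by
  simp only [hess, fderiv_comp_sub]
  rw [fderiv_comp_sub (f := fun y => fderiv ℝ F y (Pi.single j 1))]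

variable {ι : Type*} [Fintype ι] {g g' : ℝ → ℝ}

lemma hasFDerivAt_sum_sum_mul_comp_sub (w : ι → ι → ℝ) (hg : ∀ t, HasDerivAt g (g' t) t)
    (x : ι → ℝ) :
    HasFDerivAt (fun y => ∑ a, ∑ b, w a b * g (y a - y b))
      (∑ a, ∑ b, (w a b * g' (x a - x b)) •
        (ContinuousLinearMap.proj (R := ℝ) (φ := fun _ : ι => ℝ) a - .proj b)) x := by
  refine HasFDerivAt.fun_sum fun a _ => HasFDerivAt.fun_sum fun b _ => ?_
  have hsub : HasFDerivAt (fun y : ι → ℝ => y a - y b)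
      (ContinuousLinearMap.proj (R := ℝ) (φ := fun _ : ι => ℝ) a - .proj b) x :=
    (hasFDerivAt_apply a x).sub (hasFDerivAt_apply b x)
  have hterm := ((hg (x a - x b)).comp_hasFDerivAt x hsub).const_mul (w a b)
  rw [← smul_smul]
  exact hterm

lemma fderiv_sum_sum_mul_comp_sub_apply (w : ι → ι → ℝ) (hg : ∀ t, HasDerivAt g (g' t) t)
    (x v : ι → ℝ) :
    fderiv ℝ (fun y => ∑ a, ∑ b, w a b * g (y a - y b)) x v
      = ∑ a, ∑ b, w a b * g' (x a - x b) * (v a - v b) := by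
  simp [(hasFDerivAt_sum_sum_mul_comp_sub w hg x).fderiv]

lemma hess_sum_sum_comp_sub {g'' : ℝ → ℝ} (hg : ∀ t, HasDerivAt g (g' t) t)
    (hg' : ∀ t, HasDerivAt g' (g'' t) t) (x : Fin J → ℝ) (i j : Fin J) :
    hess (fun y => ∑ a, ∑ b, g (y a - y b)) x i j
      = weightedLaplacian (fun a b => g'' (x a - x b)) i j := by
  have hgrad : ∀ y : Fin J → ℝ, fderiv ℝ (fun y => ∑ a, ∑ b, g (y a - y b)) y (Pi.single j 1)
      = ∑ a, ∑ b, (Pi.single a 1 - Pi.single b 1 : Fin J → ℝ) j * g' (y a - y b) := by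
    intro y
    simpa [Pi.single_comm j, mul_comm] using
      fderiv_sum_sum_mul_comp_sub_apply (fun _ _ => 1) hg y (Pi.single j 1)
  rw [hess, funext hgrad, fderiv_sum_sum_mul_comp_sub_apply _ hg' x]
  refine sum_congr rfl fun a _ => sum_congr rfl fun b _ => ?_
  simp only [Pi.sub_apply, Pi.single_comm i]
  ring

end Hessian

section CosSum

variable {κ : Type*} (K : Finset κ) (w Ω : κ → ℝ)

def cosSum (t : ℝ) : ℝ := ∑ k ∈ K, w k * cos (Ω k * t)

lemma hasDerivAt_cosSum (t : ℝ) :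
    HasDerivAt (cosSum K w Ω) (-∑ k ∈ K, w k * Ω k * sin (Ω k * t)) t := by
  have hcos : HasDerivAt (fun t => ∑ k ∈ K, w k * cos (Ω k * t))
      (∑ k ∈ K, w k * (-sin (Ω k * t) * (Ω k * 1))) t :=
    HasDerivAt.fun_sum fun k _ => (((hasDerivAt_id t).const_mul (Ω k)).cos).const_mul (w k)
  refine hcos.congr_deriv ?_
  rw [← sum_neg_distrib]
  exact sum_congr rfl fun k _ => by ring

lemma hasDerivAt_neg_sum_mul_sin (t : ℝ) :
    HasDerivAt (fun t => -∑ k ∈ K, w k * Ω k * sin (Ω k * t))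
      (cosSum K (fun k => -(w k * Ω k ^ 2)) Ω t) t := by
  have hsin : HasDerivAt (fun t => ∑ k ∈ K, w k * Ω k * sin (Ω k * t))
      (∑ k ∈ K, w k * Ω k * (cos (Ω k * t) * (Ω k * 1))) t :=
    HasDerivAt.fun_sum fun k _ => (((hasDerivAt_id t).const_mul (Ω k)).sin).const_mul (w k * Ω k)
  refine hsin.neg.congr_deriv ?_
  simp only [cosSum, ← sum_neg_distrib]
  exact sum_congr rfl fun k _ => by ring

lemma abs_one_sub_cos_le (x : ℝ) : |1 - cos x| ≤ x ^ 2 / 2 := by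
  rw [abs_of_nonneg (sub_nonneg.2 (cos_le_one x))]
  linarith [one_sub_sq_div_two_le_cos (x := x)]

lemma abs_cosSum_zero_sub_le (t : ℝ) :
    |cosSum K w Ω 0 - cosSum K w Ω t| ≤ t ^ 2 / 2 * ∑ k ∈ K, |w k| * Ω k ^ 2 := calc
  _ = |∑ k ∈ K, w k * (1 - cos (Ω k * t))| := by
      simp only [cosSum, mul_zero, cos_zero, ← sum_sub_distrib, mul_sub, mul_one]
  _ ≤ ∑ k ∈ K, |w k| * ((Ω k * t) ^ 2 / 2) := by
      refine (abs_sum_le_sum_abs _ _).trans (sum_le_sum fun k _ => ?_)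
      rw [abs_mul]
      exact mul_le_mul_of_nonneg_left (abs_one_sub_cos_le _) (abs_nonneg _)
  _ = t ^ 2 / 2 * ∑ k ∈ K, |w k| * Ω k ^ 2 := by
      rw [mul_sum]; exact sum_congr rfl fun k _ => by ring

end CosSum

lemma pow_four_le_one_add_abs_rpow {s : ℝ} (hs : 2 ≤ s) (x : ℝ) : x ^ 4 ≤ 1 + |x| ^ (2 * s) := by
  rw [← (show Even 4 by decide).pow_abs]
  rcases le_total |x| 1 with hx | hx
  · linarith [pow_le_one₀ (abs_nonneg x) hx (n := 4), Real.rpow_nonneg (abs_nonneg x) (2 * s)]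
  · calc |x| ^ 4 = |x| ^ ((4 : ℕ) : ℝ) := (Real.rpow_natCast _ 4).symm
      _ ≤ |x| ^ (2 * s) := Real.rpow_le_rpow_of_exponent_le hx (by push_cast; linarith)
      _ ≤ 1 + |x| ^ (2 * s) := le_add_of_nonneg_left zero_le_one

lemma sum_pow_four_mul_le_tsum {s : ℝ} (hs : 2 ≤ s) {u : ℤ → ℝ} (hu : ∀ k, 0 ≤ u k)
    (hsum : Summable fun k : ℤ => (1 + |(k : ℝ)| ^ (2 * s)) * u k) (K : Finset ℤ) :
    ∑ k ∈ K, (k : ℝ) ^ 4 * u k ≤ ∑' k : ℤ, (1 + |(k : ℝ)| ^ (2 * s)) * u k := calc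
  _ ≤ ∑ k ∈ K, (1 + |(k : ℝ)| ^ (2 * s)) * u k :=
      sum_le_sum fun k _ => mul_le_mul_of_nonneg_right (pow_four_le_one_add_abs_rpow hs k) (hu k)
  _ ≤ _ := hsum.sum_le_tsum K fun k _ =>
      mul_nonneg (add_nonneg zero_le_one (Real.rpow_nonneg (abs_nonneg _) _)) (hu k)

lemma sum_norm_sub_mean_sq {E : Type*} [NormedAddCommGroup E] [InnerProductSpace ℝ E]
    {ι : Type*} [Fintype ι] (z : ι → E) :
    ∑ j, ‖z j - (Fintype.card ι : ℝ)⁻¹ • ∑ j', z j'‖ ^ 2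
      = ∑ j, ‖z j‖ ^ 2 - (Fintype.card ι : ℝ)⁻¹ * ‖∑ j, z j‖ ^ 2 := by
  rcases isEmpty_or_nonempty ι with hι | hι
  · simp
  have hn : (Fintype.card ι : ℝ) ≠ 0 := by positivity
  simp only [norm_sub_sq_real, sum_add_distrib, sum_sub_distrib, inner_smul_right, ← mul_sum,
    ← sum_inner, real_inner_self_eq_norm_sq, norm_smul, mul_pow, sum_const, card_univ,
    nsmul_eq_mul, norm_inv, Real.norm_natCast]
  field_simp
  ring

lemma eK_eq_exp_mul_I (k : ℤ) (x : ℝ) : eK k x = Complex.exp ((2 * π * k * x : ℝ) * Complex.I) := by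
  simp only [eK, twoPiI]; push_cast; ring_nf

lemma norm_eK (k : ℤ) (x : ℝ) : ‖eK k x‖ = 1 := by
  rw [eK_eq_exp_mul_I, Complex.norm_exp_ofReal_mul_I]

lemma re_eK (k : ℤ) (x : ℝ) : (eK k x).re = cos (2 * π * k * x) := by
  rw [eK_eq_exp_mul_I, Complex.exp_ofReal_mul_I_re]

lemma eK_mul_conj (k : ℤ) (x y : ℝ) : eK k x * starRingEnd ℂ (eK k y) = eK k (x - y) := by
  rw [eK_eq_exp_mul_I, eK_eq_exp_mul_I, eK_eq_exp_mul_I, ← Complex.exp_conj, ← Complex.exp_add,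
    map_mul, Complex.conj_ofReal, Complex.conj_I]
  push_cast; ring_nf

lemma norm_sum_eK_sq {ι : Type*} [Fintype ι] (k : ℤ) (x : ι → ℝ) :
    ‖∑ j, eK k (x j)‖ ^ 2 = ∑ a, ∑ b, cos (2 * π * k * (x a - x b)) := by
  have hre : ‖∑ j, eK k (x j)‖ ^ 2
      = ((∑ a, eK k (x a)) * starRingEnd ℂ (∑ b, eK k (x b))).re := by
    rw [Complex.mul_conj, Complex.ofReal_re, Complex.sq_norm]
  rw [hre, map_sum, sum_mul_sum, Complex.re_sum]
  simp only [Complex.re_sum, eK_mul_conj, re_eK]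

lemma Mpop_eq {f : ℝ → ℝ} {k0 J : ℕ} (hJ : 0 < J) (θstar : Fin J → ℝ) :
    Mpop f k0 J θstar = fun θ => (∑ k ∈ Icc (-(k0 : ℤ)) k0, ‖fc f k‖ ^ 2)
      - ∑ a, ∑ b, cosSum (Icc (-(k0 : ℤ)) k0) (fun k => ‖fc f k‖ ^ 2 / J ^ 2)
          (fun k => 2 * π * k) ((θ - θstar) a - (θ - θstar) b) := by
  have hJ' : (J : ℝ) ≠ 0 := by positivity
  funext θ
  have hmode : ∀ k : ℤ, ∑ j, ‖fc f k * eK k (θ j - θstar j)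
      - (J : ℂ)⁻¹ * ∑ j', fc f k * eK k (θ j' - θstar j')‖ ^ 2
      = J * ‖fc f k‖ ^ 2 - ‖fc f k‖ ^ 2 / J * ∑ a, ∑ b,
          cos (2 * π * k * ((θ - θstar) a - (θ - θstar) b)) := by
    intro k
    have h := sum_norm_sub_mean_sq (fun j => fc f k * eK k (θ j - θstar j))
    simp only [Fintype.card_fin, Complex.real_smul, Complex.ofReal_inv, Complex.ofReal_natCast,
      norm_mul, norm_eK, mul_one, ← mul_sum, mul_pow, norm_sum_eK_sq, sum_const, card_univ,
      nsmul_eq_mul] at h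
    simp only [← mul_sum, Pi.sub_apply]
    rw [h]
    ring
  have hswap : ∀ F : ℤ → Fin J → Fin J → ℝ, ∑ a, ∑ b, ∑ k ∈ Icc (-(k0 : ℤ)) k0, F k a b
      = ∑ k ∈ Icc (-(k0 : ℤ)) k0, ∑ a, ∑ b, F k a b := fun F =>
    (sum_congr rfl fun _ _ => sum_comm).trans sum_comm
  simp only [Mpop, cosSum]
  rw [sum_comm, mul_sum, hswap, ← sum_sub_distrib]
  refine sum_congr rfl fun k _ => ?_
  rw [hmode]
  simp only [← mul_sum]
  field_simp

lemma sub_theta0_apply_sub (J : ℕ) (θstar θ : Fin J → ℝ) (a b : Fin J) :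
    (θ - θstar) a - (θ - θstar) b = (θ - theta0 J θstar) a - (θ - theta0 J θstar) b := by
  simp only [Pi.sub_apply, theta0]; ring

lemma sum_sub_theta0_eq_zero {J : ℕ} (hJ : 0 < J) {θ : Fin J → ℝ} (hθ : ∑ j, θ j = 0)
    (θstar : Fin J → ℝ) : ∑ j, (θ - theta0 J θstar) j = 0 := by
  have hJ' : (J : ℝ) ≠ 0 := by positivity
  simp only [Pi.sub_apply, theta0, sum_sub_distrib, hθ, sum_const, card_univ, Fintype.card_fin,
    nsmul_eq_mul]
  field_simp
  ring

/-- `g''` for the profile `g(t) = J⁻² ∑_{|k| ≤ k₀} |c_k|² cos(2πkt)` of the criterion. -/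
def profileDeriv2 (f : ℝ → ℝ) (k0 J : ℕ) : ℝ → ℝ :=
  cosSum (Icc (-(k0 : ℤ)) k0) (fun k => -(‖fc f k‖ ^ 2 / J ^ 2 * (2 * π * k) ^ 2))
    (fun k => 2 * π * k)

lemma hess_Mpop_sub_hess_Mpop_theta0 {f : ℝ → ℝ} {k0 J : ℕ} (hJ : 0 < J) (θstar θ : Fin J → ℝ)
    (i j : Fin J) :
    hess (Mpop f k0 J θstar) θ i j - hess (Mpop f k0 J θstar) (theta0 J θstar) i j
      = weightedLaplacian (fun a b => profileDeriv2 f k0 J 0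
          - profileDeriv2 f k0 J ((θ - theta0 J θstar) a - (θ - theta0 J θstar) b)) i j := by
  set K := Icc (-(k0 : ℤ)) k0
  set w : ℤ → ℝ := fun k => ‖fc f k‖ ^ 2 / J ^ 2
  set Ω : ℤ → ℝ := fun k => 2 * π * k
  have hM : ∀ x, hess (Mpop f k0 J θstar) x i j
      = -weightedLaplacian (fun a b => cosSum K (fun k => -(w k * Ω k ^ 2)) Ω
          ((x - θstar) a - (x - θstar) b)) i j := fun x => by
    rw [Mpop_eq hJ, hess_const_sub,
      hess_comp_sub (fun y => ∑ a, ∑ b, cosSum K w Ω (y a - y b)),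
      hess_sum_sum_comp_sub (hasDerivAt_cosSum K w Ω) (hasDerivAt_neg_sum_mul_sin K w Ω)]
  rw [hM, hM, neg_sub_neg, weightedLaplacian_sub]
  simp only [sub_theta0_apply_sub J θstar, sub_self, Pi.zero_apply]
  rfl

lemma abs_profileDeriv2_zero_sub_le {A s : ℝ} (hs : 2 ≤ s) {f : ℝ → ℝ}
    (hsum : Summable fun k : ℤ => (1 + |(k : ℝ)| ^ (2 * s)) * ‖fc f k‖ ^ 2)
    (htsum : ∑' k : ℤ, (1 + |(k : ℝ)| ^ (2 * s)) * ‖fc f k‖ ^ 2 ≤ A ^ 2) (k0 J : ℕ) (t : ℝ) :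
    |profileDeriv2 f k0 J 0 - profileDeriv2 f k0 J t| ≤ 8 * π ^ 4 * A ^ 2 / J ^ 2 * t ^ 2 := calc
  _ ≤ t ^ 2 / 2 * ∑ k ∈ Icc (-(k0 : ℤ)) k0,
        |-(‖fc f k‖ ^ 2 / J ^ 2 * (2 * π * k) ^ 2)| * (2 * π * k) ^ 2 :=
      abs_cosSum_zero_sub_le _ _ _ t
  _ = t ^ 2 / 2 * ∑ k ∈ Icc (-(k0 : ℤ)) k0, 16 * π ^ 4 / J ^ 2 * ((k : ℝ) ^ 4 * ‖fc f k‖ ^ 2) := by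
      congr 1
      refine Finset.sum_congr rfl fun k _ => ?_
      rw [abs_neg, abs_of_nonneg (by positivity)]
      ring
  _ = t ^ 2 / 2 * (16 * π ^ 4 / J ^ 2) * ∑ k ∈ Icc (-(k0 : ℤ)) k0, (k : ℝ) ^ 4 * ‖fc f k‖ ^ 2 := by
      rw [mul_assoc, ← mul_sum]
  _ ≤ t ^ 2 / 2 * (16 * π ^ 4 / J ^ 2) * A ^ 2 := by
      gcongr
      exact (sum_pow_four_mul_le_tsum hs (fun k => sq_nonneg _) hsum _).trans htsum
  _ = 8 * π ^ 4 * A ^ 2 / J ^ 2 * t ^ 2 := by ring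

theorem population_criterion_hessian_lipschitz_general
    (A s cstar : ℝ) (hs : 2 ≤ s)
    (f : ℝ → ℝ) (hf : f ∈ sobolevBall s A cstar)
    (k0 J : ℕ) (θstar : Fin J → ℝ)
    (θ : Fin J → ℝ) (hθ : ∑ j, θ j = 0) :
    opNorm (fun i j =>
        hess (Mpop f k0 J θstar) θ i j - hess (Mpop f k0 J θstar) (theta0 J θstar) i j)
      ≤ (64 * Real.pi^4 * A^2 / J) * ∑ j, (θ j - theta0 J θstar j) ^ 2 := by
  obtain ⟨-, -, -, hsum, htsum, -⟩ := hf
  rcases Nat.eq_zero_or_pos J with rfl | hJ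
  · simp [opNorm]
  simp only [hess_Mpop_sub_hess_Mpop_theta0 hJ]
  calc _ ≤ 8 * (8 * π ^ 4 * A ^ 2 / J ^ 2) * J * ∑ j, (θ - theta0 J θstar) j ^ 2 :=
        opNorm_weightedLaplacian_le (by positivity)
          (fun a b => abs_profileDeriv2_zero_sub_le hs hsum htsum k0 J _)
          (sum_sub_theta0_eq_zero hJ hθ θstar)
    _ = _ := by
        simp only [Pi.sub_apply]
        field_simp
        ring

/-- **Lemma (Lipschitz-type bound for the Hessian of the population criterion).**
For `f ∈ W̃_s(A,c_*)` with `s ≥ 2`, `k₀ ≥ 1`, and every `θ ∈ ℝ^J` with `∑_j θ_j = 0`: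
`‖∇²M(θ) - ∇²M(θ⁰)‖_op ≤ (64π⁴A²/J) ‖θ - θ⁰‖²`. -/
theorem population_criterion_hessian_lipschitz
    (A s cstar : ℝ) (hA : 0 < A) (hs : 2 ≤ s) (hcstar : 0 < cstar)
    (f : ℝ → ℝ) (hf : f ∈ sobolevBall s A cstar)
    (k0 J : ℕ) (hk0 : 1 ≤ k0) (θstar : Fin J → ℝ)
    (θ : Fin J → ℝ) (hθ : ∑ j, θ j = 0) :
    opNorm (fun i j =>
        hess (Mpop f k0 J θstar) θ i j - hess (Mpop f k0 J θstar) (theta0 J θstar) i j)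
      ≤ (64 * Real.pi^4 * A^2 / J) * ∑ j, (θ j - theta0 J θstar j) ^ 2 :=
  population_criterion_hessian_lipschitz_general A s cstar hs f hf k0 J θstar θ hθ
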